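/- There exists a universal constant C > 0 with the following property. Let Ω be a finite set with full-support probability measure μ, and assume the product semigroup (P_t) on Ωⁿ is hypercontractive with constant ρ ∈ (0,1]. Then for every ε ∈ (0,1) and every f : Ωⁿ → ℝ with max_{1≤i≤n} ‖L_i f‖_∞ ≤ 1 and total influence I(f) ≥ 1, there exists a function g : Ωⁿ → ℝ depending on at most exp(C·I(f)·(1 + |log(ε ρ)|)/(ρ ε²)) coordinates such that ‖f − g‖_{L²(μ^{⊗n})} ≤ ε. -/

import Mathlib

open Finset

variable {Ω : Type} [Fintype Ω] {n : ℕ}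

/-- The product weight of the product measure `μ^{⊗n}` on `Ωⁿ`. -/
def prodWeight (w : Ω → ℝ) (x : Fin n → Ω) : ℝ := ∏ i, w (x i)

/-- The operator `L_i f(x) = ∫_Ω f(x_1,…,y,…,x_n) dμ(y) − f(x)`, as a linear map. -/
noncomputable def Lcoord (w : Ω → ℝ) (i : Fin n) :
    ((Fin n → Ω) → ℝ) →ₗ[ℝ] ((Fin n → Ω) → ℝ) where
  toFun f := fun x => (∑ y, w y * f (Function.update x i y)) - f x
  map_add' f g := by
    funext x
    simp [mul_add, Finset.sum_add_distrib]
    ring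
  map_smul' c f := by
    funext x
    simp only [Pi.smul_apply, smul_eq_mul, RingHom.id_apply, mul_sub, Finset.mul_sum]
    congr 1
    exact Finset.sum_congr rfl fun y _ => by ring

/-- `L = Σ_i L_i`. -/
noncomputable def Ltot (w : Ω → ℝ) (n : ℕ) :
    ((Fin n → Ω) → ℝ) →ₗ[ℝ] ((Fin n → Ω) → ℝ) :=
  ∑ i : Fin n, Lcoord w i

/-- The semigroup `P_t = e^{tL}`. -/
noncomputable def Psemi (w : Ω → ℝ) (n : ℕ) (t : ℝ) : ((Fin n → Ω) → ℝ) → ((Fin n → Ω) → ℝ) :=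
  fun f => NormedSpace.exp (t • (LinearMap.toContinuousLinearMap (Ltot w n))) f

/-- `Π_T f` : the function obtained from `f` by integrating out the coordinates
in `T` against `μ`. -/
noncomputable def PiT (w : Ω → ℝ) (T : Finset (Fin n)) (f : (Fin n → Ω) → ℝ) :
    (Fin n → Ω) → ℝ :=
  fun x => ∑ y : { i // i ∈ T } → Ω, (∏ i : { i // i ∈ T }, w (y i)) *
    f (fun i => if h : i ∈ T then y ⟨i, h⟩ else x i)

/-- The `L¹(μ^{⊗n})` norm. -/
noncomputable def nrm1 (w : Ω → ℝ) (f : (Fin n → Ω) → ℝ) : ℝ :=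
  ∑ x, prodWeight w x * |f x|

/-- The square of the `L²(μ^{⊗n})` norm. -/
noncomputable def nrm2sq (w : Ω → ℝ) (f : (Fin n → Ω) → ℝ) : ℝ :=
  ∑ x, prodWeight w x * (f x) ^ 2

/-- The `L^p(μ^{⊗n})` norm. -/
noncomputable def nrmp (w : Ω → ℝ) (p : ℝ) (f : (Fin n → Ω) → ℝ) : ℝ :=
  (∑ x, prodWeight w x * |f x| ^ p) ^ (1 / p)

/-- The influence of coordinate `i` on `f` : `I_i(f) = ‖L_i f‖_{L¹(μ^{⊗n})}`. -/
noncomputable def influence (w : Ω → ℝ) (i : Fin n) (f : (Fin n → Ω) → ℝ) : ℝ :=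
  nrm1 w (Lcoord w i f)


/-!
Friedgut's junta argument. Write `E_i` for averaging over the `i`-th coordinate; `E_i` and
`1 - E_i` are commuting complementary idempotents, so `f = ∑_T f_T` with orthogonal pieces
`f_T = ∏_{i ∈ T} (1 - E_i) ∏_{i ∉ T} E_i f`, `L_i f = -∑_{T ∋ i} f_T` and `P_t f_T = e^{-t|T|} f_T`.
Let `S` be the coordinates of influence at least `σ³` and `g = ∑_{T ⊆ S} f_T`. The part of `f - g`
on levels `|T| > k` has mass at most `I(f)/k`, because `∑_T |T| ‖f_T‖² = ∑_i ‖L_i f‖² ≤ I(f)`.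
The part on levels `|T| ≤ k` has mass at most `e^{2tk} ∑_{i ∉ S} ‖P_t L_i f‖²`, and
hypercontractivity at the time with `e^{-2ρt} = 1/2` gives
`‖P_t L_i f‖₂² ≤ ‖L_i f‖_{3/2}² ≤ I_i^{4/3} ≤ σ I_i`. With `k = 2I(f)/ε²` and `σ = e^{-2tk}/k`
the error is `ε²`, while `|S| ≤ I(f)/σ³`.
-/

theorem NormedSpace.exp_smul_apply_of_apply_eq_smul {E : Type*} [NormedAddCommGroup E]
    [NormedSpace ℝ E] [CompleteSpace E] {A : E →L[ℝ] E} {v : E} {c : ℝ} (hv : A v = c • v)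
    (t : ℝ) : NormedSpace.exp (t • A) v = Real.exp (t * c) • v := by
  have hpow (k : ℕ) : ((t • A) ^ k) v = (t * c) ^ k • v := by
    induction k with
    | zero => simp
    | succ k ih =>
      rw [pow_succ', mul_apply_eq_comp, ih, map_smul, smul_apply, hv, smul_smul, smul_smul]
      ring_nf
  have hA := (NormedSpace.exp_series_hasSum_exp' (𝕂 := ℝ) (t • A)).mapL
    (ContinuousLinearMap.apply ℝ E v)
  have hc := (NormedSpace.exp_series_hasSum_exp' (𝕂 := ℝ) (t * c)).smul_const v
  rw [← Real.exp_eq_exp_ℝ] at hc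
  refine hA.unique ?_
  convert hc using 1
  funext k
  simp [hpow, smul_smul]

variable {w : Ω → ℝ}

open scoped Classical in
/-- The kernel of `c.1 • (1 - E) + c.2 • E`, where `E` averages against `w`; composing such
kernels multiplies the coefficients componentwise. -/
noncomputable def coordKernel (w : Ω → ℝ) (c : ℝ × ℝ) (a b : Ω) : ℝ :=
  c.1 * ((if a = b then 1 else 0) - w b) + c.2 * w b

noncomputable def kernelOp (w : Ω → ℝ) (c : Fin n → ℝ × ℝ) (f : (Fin n → Ω) → ℝ)
    (x : Fin n → Ω) : ℝ :=
  ∑ y, (∏ i, coordKernel w (c i) (x i) (y i)) * f y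

def l2Inner (w : Ω → ℝ) (f g : (Fin n → Ω) → ℝ) : ℝ :=
  ∑ x, prodWeight w x * (f x * g x)

theorem sum_coordKernel_mul (hw1 : ∑ a, w a = 1) (c d : ℝ × ℝ) (a e : Ω) :
    ∑ b, coordKernel w c a b * coordKernel w d b e = coordKernel w (c * d) a e := by
  classical
  simp only [coordKernel, Prod.fst_mul, Prod.snd_mul, add_mul, mul_add, mul_sub, sub_mul,
    Finset.sum_add_distrib, Finset.sum_sub_distrib, ← Finset.sum_mul, ← Finset.mul_sum]
  simp only [mul_ite, ite_mul, mul_one, mul_zero, zero_mul, Finset.sum_ite_eq,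
    Finset.sum_ite_eq', Finset.mem_univ, if_true, hw1]
  ring

theorem kernelOp_one (f : (Fin n → Ω) → ℝ) : kernelOp w 1 f = f := by
  classical
  funext x
  simp [kernelOp, coordKernel, ← funext_iff, Finset.prod_boole]

theorem kernelOp_kernelOp (hw1 : ∑ a, w a = 1) (c d : Fin n → ℝ × ℝ) (f : (Fin n → Ω) → ℝ) :
    kernelOp w c (kernelOp w d f) = kernelOp w (c * d) f := by
  funext x
  simp only [kernelOp, Finset.mul_sum]
  rw [Finset.sum_comm]
  refine Finset.sum_congr rfl fun y _ => ?_
  simp only [Pi.mul_apply, ← sum_coordKernel_mul hw1, Finset.prod_univ_sum, Finset.sum_mul,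
    Fintype.piFinset_univ]
  exact Finset.sum_congr rfl fun z _ => by rw [Finset.prod_mul_distrib]; ring

theorem kernelOp_eq_zero_of_apply_eq_zero {c : Fin n → ℝ × ℝ} {j : Fin n} (hj : c j = 0)
    (f : (Fin n → Ω) → ℝ) : kernelOp w c f = 0 := by
  funext x
  refine Finset.sum_eq_zero fun y _ => ?_
  rw [Finset.prod_eq_zero (Finset.mem_univ j) (by simp [coordKernel, hj]), zero_mul]

theorem kernelOp_update_one (i : Fin n) (d : ℝ × ℝ) (f : (Fin n → Ω) → ℝ) (x : Fin n → Ω) :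
    kernelOp w (Function.update 1 i d) f x
      = ∑ b, coordKernel w d (x i) b * f (Function.update x i b) := by
  classical
  have hK (y : Fin n → Ω) : ∏ j, coordKernel w (Function.update (1 : Fin n → ℝ × ℝ) i d j)
      (x j) (y j) = coordKernel w d (x i) (y i) * ∏ j ∈ {i}ᶜ, coordKernel w 1 (x j) (y j) := by
    rw [Fintype.prod_eq_mul_prod_compl i, Function.update_self]
    congr 1
    exact Finset.prod_congr rfl fun j hj => by rw [Function.update_of_ne (by simpa using hj)]; rfl
  have hK0 (y : Fin n → Ω) (hy : y ∉ Finset.univ.image (Function.update x i)) :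
      ∏ j ∈ {i}ᶜ, coordKernel w 1 (x j) (y j) = 0 := by
    obtain ⟨j, hji, hj⟩ : ∃ j ≠ i, x j ≠ y j := by
      by_contra! h
      exact hy (Finset.mem_image.2 ⟨y i, Finset.mem_univ _, by
        rw [Function.update_eq_iff]; exact ⟨rfl, fun j hj => h j hj⟩⟩)
    exact Finset.prod_eq_zero (by simpa using hji) (by simp [coordKernel, hj])
  rw [kernelOp, ← Finset.sum_subset (Finset.subset_univ _) fun y _ hy => by
    rw [hK, hK0 y hy, mul_zero, zero_mul], Finset.sum_image fun a _ b _ h =>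
    Function.update_injective x i h]
  refine Finset.sum_congr rfl fun b _ => ?_
  rw [hK, Finset.prod_eq_one fun j hj => ?_, mul_one, Function.update_self]
  simp [coordKernel, Function.update_of_ne (show j ≠ i by simpa using hj)]

theorem Lcoord_eq_neg_kernelOp (i : Fin n) (f : (Fin n → Ω) → ℝ) :
    Lcoord w i f = -kernelOp w (Function.update 1 i (1, 0)) f := by
  classical
  funext x
  simp [kernelOp_update_one, Lcoord, coordKernel, sub_mul, Finset.sum_sub_distrib,
    Finset.sum_ite_eq]

theorem l2Inner_kernelOp_left (c : Fin n → ℝ × ℝ) (f g : (Fin n → Ω) → ℝ) :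
    l2Inner w (kernelOp w c f) g = l2Inner w f (kernelOp w c g) := by
  have hsymm (x y : Fin n → Ω) : prodWeight w x * ∏ i, coordKernel w (c i) (x i) (y i)
      = prodWeight w y * ∏ i, coordKernel w (c i) (y i) (x i) := by
    simp only [prodWeight, ← Finset.prod_mul_distrib]
    refine Finset.prod_congr rfl fun i _ => ?_
    by_cases h : x i = y i
    · simp [coordKernel, h]
    · simp only [coordKernel, h, Ne.symm h, if_false, zero_sub]
      ring
  simp only [l2Inner, kernelOp, Finset.sum_mul, Finset.mul_sum]
  rw [Finset.sum_comm]
  refine Finset.sum_congr rfl fun x _ => Finset.sum_congr rfl fun y _ => ?_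
  linear_combination (f x * g y) * hsymm y x

/-- `f_T = ∏_{i ∈ T} (1 - E_i) ∏_{i ∉ T} E_i f`. -/
noncomputable def efronStein (w : Ω → ℝ) (T : Finset (Fin n)) :
    ((Fin n → Ω) → ℝ) → (Fin n → Ω) → ℝ :=
  kernelOp w fun i => if i ∈ T then (1, 0) else (0, 1)

theorem sum_efronStein (f : (Fin n → Ω) → ℝ) : ∑ T, efronStein w T f = f := by
  conv_rhs => rw [← kernelOp_one (w := w) f]
  funext x
  simp only [Finset.sum_apply, efronStein, kernelOp]
  rw [Finset.sum_comm]
  refine Finset.sum_congr rfl fun y _ => ?_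
  rw [← Finset.sum_mul]
  congr 1
  have hsplit (i : Fin n) : coordKernel w 1 (x i) (y i)
      = coordKernel w (1, 0) (x i) (y i) + coordKernel w (0, 1) (x i) (y i) := by
    simp [coordKernel]
  simp only [Pi.one_apply, hsplit, Fintype.prod_add]
  refine Finset.sum_congr rfl fun T _ => ?_
  rw [← Finset.prod_mul_prod_compl T]
  congr 1 <;> refine Finset.prod_congr rfl fun i hi => ?_
  · rw [if_pos hi]
  · rw [if_neg (Finset.mem_compl.1 hi)]

theorem efronStein_efronStein_of_ne (hw1 : ∑ a, w a = 1) {T T' : Finset (Fin n)} (h : T ≠ T')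
    (f : (Fin n → Ω) → ℝ) : efronStein w T (efronStein w T' f) = 0 := by
  obtain ⟨j, hj⟩ : ∃ j, ¬ (j ∈ T ↔ j ∈ T') := by
    by_contra! hT
    exact h (Finset.ext hT)
  rw [efronStein, efronStein, kernelOp_kernelOp hw1]
  refine kernelOp_eq_zero_of_apply_eq_zero (j := j) ?_ f
  by_cases hjT : j ∈ T <;> simp_all

theorem l2Inner_efronStein_of_ne (hw1 : ∑ a, w a = 1) {T T' : Finset (Fin n)} (h : T ≠ T')
    (f g : (Fin n → Ω) → ℝ) : l2Inner w (efronStein w T f) (efronStein w T' g) = 0 := by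
  rw [efronStein, l2Inner_kernelOp_left, ← efronStein, efronStein_efronStein_of_ne hw1 h]
  simp [l2Inner]

theorem Lcoord_efronStein (hw1 : ∑ a, w a = 1) (i : Fin n) (T : Finset (Fin n))
    (f : (Fin n → Ω) → ℝ) :
    Lcoord w i (efronStein w T f) = if i ∈ T then -efronStein w T f else 0 := by
  rw [Lcoord_eq_neg_kernelOp, efronStein, kernelOp_kernelOp hw1]
  split_ifs with hi
  · congr 2
    funext j
    by_cases hj : j = i
    · subst hj; simp [hi]
    · simp [hj]
  · rw [kernelOp_eq_zero_of_apply_eq_zero (j := i) (by simp [hi]), neg_zero]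

theorem Ltot_efronStein (hw1 : ∑ a, w a = 1) (T : Finset (Fin n)) (f : (Fin n → Ω) → ℝ) :
    Ltot w n (efronStein w T f) = (-(T.card : ℝ)) • efronStein w T f := by
  simp [Ltot, LinearMap.sum_apply, Lcoord_efronStein hw1, neg_smul, -nsmul_eq_mul,
    ← Nat.cast_smul_eq_nsmul ℝ]

theorem Psemi_efronStein (hw1 : ∑ a, w a = 1) (t : ℝ) (T : Finset (Fin n))
    (f : (Fin n → Ω) → ℝ) :
    Psemi w n t (efronStein w T f) = Real.exp (-(t * T.card)) • efronStein w T f := by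
  have h := NormedSpace.exp_smul_apply_of_apply_eq_smul
    (A := LinearMap.toContinuousLinearMap (Ltot w n)) (Ltot_efronStein hw1 T f) t
  rwa [mul_neg] at h

theorem efronStein_apply_eq_of_subset {S T : Finset (Fin n)} (hTS : T ⊆ S) (f : (Fin n → Ω) → ℝ)
    {x y : Fin n → Ω} (hxy : ∀ i ∈ S, x i = y i) : efronStein w T f x = efronStein w T f y := by
  refine Finset.sum_congr rfl fun z _ => ?_
  congr 1
  refine Finset.prod_congr rfl fun i _ => ?_
  by_cases hiS : i ∈ S
  · rw [hxy i hiS]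
  · have hiT : i ∉ T := fun h => hiS (hTS h)
    simp [coordKernel, hiT]

theorem nrm2sq_sum_smul_efronStein (hw1 : ∑ a, w a = 1) (A : Finset (Finset (Fin n)))
    (β : Finset (Fin n) → ℝ) (f : (Fin n → Ω) → ℝ) :
    nrm2sq w (∑ T ∈ A, β T • efronStein w T f)
      = ∑ T ∈ A, β T ^ 2 * nrm2sq w (efronStein w T f) := by
  calc nrm2sq w (∑ T ∈ A, β T • efronStein w T f)
      = ∑ T ∈ A, ∑ T' ∈ A, β T * β T' * l2Inner w (efronStein w T f) (efronStein w T' f) := by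
        simp only [nrm2sq, l2Inner, Finset.sum_apply, Pi.smul_apply, smul_eq_mul, sq,
          Finset.sum_mul, Finset.mul_sum]
        rw [Finset.sum_comm]
        refine Finset.sum_congr rfl fun T _ => ?_
        rw [Finset.sum_comm]
        exact Finset.sum_congr rfl fun T' _ => Finset.sum_congr rfl fun x _ => by ring
    _ = ∑ T ∈ A, β T ^ 2 * nrm2sq w (efronStein w T f) := by
        refine Finset.sum_congr rfl fun T hT => ?_
        rw [Finset.sum_eq_single_of_mem T hT fun T' _ h => by
          rw [l2Inner_efronStein_of_ne hw1 (Ne.symm h), mul_zero]]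
        simp only [nrm2sq, l2Inner, sq, Finset.mul_sum]

theorem Lcoord_eq_sum_efronStein (hw1 : ∑ a, w a = 1) (i : Fin n) (f : (Fin n → Ω) → ℝ) :
    Lcoord w i f = ∑ T with i ∈ T, (-1 : ℝ) • efronStein w T f := by
  conv_lhs => rw [← sum_efronStein (w := w) f]
  rw [map_sum, Finset.sum_filter]
  exact Finset.sum_congr rfl fun T _ => by rw [Lcoord_efronStein hw1, neg_one_smul]

theorem nrm2sq_Lcoord (hw1 : ∑ a, w a = 1) (i : Fin n) (f : (Fin n → Ω) → ℝ) :
    nrm2sq w (Lcoord w i f) = ∑ T with i ∈ T, nrm2sq w (efronStein w T f) := by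
  rw [Lcoord_eq_sum_efronStein hw1, nrm2sq_sum_smul_efronStein hw1]
  simp

theorem nrm2sq_Psemi_Lcoord (hw1 : ∑ a, w a = 1) (t : ℝ) (i : Fin n) (f : (Fin n → Ω) → ℝ) :
    nrm2sq w (Psemi w n t (Lcoord w i f))
      = ∑ T with i ∈ T, Real.exp (-(t * T.card)) ^ 2 * nrm2sq w (efronStein w T f) := by
  have hP : Psemi w n t (Lcoord w i f)
      = ∑ T with i ∈ T, (-Real.exp (-(t * T.card))) • efronStein w T f := by
    have hlin (g : (Fin n → Ω) → ℝ) : Psemi w n t g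
        = NormedSpace.exp (t • LinearMap.toContinuousLinearMap (Ltot w n)) g := rfl
    rw [Lcoord_eq_sum_efronStein hw1, hlin, map_sum]
    refine Finset.sum_congr rfl fun T _ => ?_
    rw [map_smul, ← hlin, Psemi_efronStein hw1, smul_smul, neg_one_mul]
  rw [hP, nrm2sq_sum_smul_efronStein hw1]
  simp

theorem nrm2sq_nonneg (hw0 : ∀ a, 0 < w a) (g : (Fin n → Ω) → ℝ) : 0 ≤ nrm2sq w g :=
  Finset.sum_nonneg fun _ _ => mul_nonneg (Finset.prod_pos fun _ _ => hw0 _).le (sq_nonneg _)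

theorem influence_nonneg (hw0 : ∀ a, 0 < w a) (i : Fin n) (f : (Fin n → Ω) → ℝ) :
    0 ≤ influence w i f :=
  Finset.sum_nonneg fun _ _ => mul_nonneg (Finset.prod_pos fun _ _ => hw0 _).le (abs_nonneg _)

theorem nrm2sq_le_nrm1_of_abs_le_one (hw0 : ∀ a, 0 < w a) {g : (Fin n → Ω) → ℝ}
    (hg : ∀ x, |g x| ≤ 1) : nrm2sq w g ≤ nrm1 w g := by
  refine Finset.sum_le_sum fun x _ =>
    mul_le_mul_of_nonneg_left ?_ (Finset.prod_pos fun _ _ => hw0 _).le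
  rw [← sq_abs]
  exact pow_le_of_le_one (abs_nonneg _) (hg x) two_ne_zero

theorem nrmp_le_nrm1_rpow_of_abs_le_one (hw0 : ∀ a, 0 < w a) {p : ℝ} (hp : 1 ≤ p)
    {g : (Fin n → Ω) → ℝ} (hg : ∀ x, |g x| ≤ 1) : nrmp w p g ≤ nrm1 w g ^ (1 / p) := by
  refine Real.rpow_le_rpow (Finset.sum_nonneg fun _ _ => ?_) (Finset.sum_le_sum fun x _ => ?_)
    (by positivity)
  · exact mul_nonneg (Finset.prod_pos fun _ _ => hw0 _).le (Real.rpow_nonneg (abs_nonneg _) _)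
  · exact mul_le_mul_of_nonneg_left (Real.rpow_le_self_of_le_one (abs_nonneg _) (hg x) hp)
      (Finset.prod_pos fun _ _ => hw0 _).le

theorem sum_card_mul_nrm2sq_efronStein_le (hw0 : ∀ a, 0 < w a) (hw1 : ∑ a, w a = 1)
    {f : (Fin n → Ω) → ℝ} (hf : ∀ i x, |Lcoord w i f x| ≤ 1) :
    ∑ T, (T.card : ℝ) * nrm2sq w (efronStein w T f) ≤ ∑ i, influence w i f := by
  calc ∑ T, (T.card : ℝ) * nrm2sq w (efronStein w T f)
      = ∑ T, ∑ i ∈ T, nrm2sq w (efronStein w T f) := by simp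
    _ = ∑ i, ∑ T with i ∈ T, nrm2sq w (efronStein w T f) := Finset.sum_comm' (by simp)
    _ = ∑ i, nrm2sq w (Lcoord w i f) := by simp_rw [nrm2sq_Lcoord hw1]
    _ ≤ ∑ i, influence w i f :=
        Finset.sum_le_sum fun i _ => nrm2sq_le_nrm1_of_abs_le_one hw0 (hf i)

theorem sum_nrm2sq_efronStein_card_gt_le (hw0 : ∀ a, 0 < w a) (hw1 : ∑ a, w a = 1)
    {f : (Fin n → Ω) → ℝ} (hf : ∀ i x, |Lcoord w i f x| ≤ 1) {k : ℝ} (hk : 0 < k) :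
    ∑ T with k < T.card, nrm2sq w (efronStein w T f) ≤ (∑ i, influence w i f) / k := by
  rw [le_div_iff₀ hk, Finset.sum_mul]
  calc ∑ T with k < T.card, nrm2sq w (efronStein w T f) * k
      ≤ ∑ T with k < T.card, (T.card : ℝ) * nrm2sq w (efronStein w T f) :=
        Finset.sum_le_sum fun T hT => by
          rw [mul_comm]
          exact mul_le_mul_of_nonneg_right (Finset.mem_filter.1 hT).2.le (nrm2sq_nonneg hw0 _)
    _ ≤ ∑ T, (T.card : ℝ) * nrm2sq w (efronStein w T f) :=
        Finset.sum_le_sum_of_subset_of_nonneg (Finset.filter_subset _ _) fun T _ _ =>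
          mul_nonneg T.card.cast_nonneg (nrm2sq_nonneg hw0 _)
    _ ≤ ∑ i, influence w i f := sum_card_mul_nrm2sq_efronStein_le hw0 hw1 hf

theorem sum_nrm2sq_efronStein_not_subset_le (hw0 : ∀ a, 0 < w a) (hw1 : ∑ a, w a = 1)
    (f : (Fin n → Ω) → ℝ) {t k : ℝ} (ht : 0 ≤ t) (S : Finset (Fin n)) :
    ∑ T with ¬T ⊆ S ∧ T.card ≤ k, nrm2sq w (efronStein w T f)
      ≤ Real.exp (2 * t * k) * ∑ i ∈ Sᶜ, nrm2sq w (Psemi w n t (Lcoord w i f)) := by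
  set u : Finset (Fin n) → ℝ := fun T => nrm2sq w (efronStein w T f)
  have hu (T : Finset (Fin n)) : 0 ≤ u T := nrm2sq_nonneg hw0 _
  have hdamp {T : Finset (Fin n)} (hT : (T.card : ℝ) ≤ k) :
      u T ≤ Real.exp (2 * t * k) * (Real.exp (-(t * T.card)) ^ 2 * u T) := by
    rw [← mul_assoc, ← Real.exp_nat_mul, ← Real.exp_add]
    refine le_mul_of_one_le_left (hu T) (Real.one_le_exp ?_)
    push_cast
    nlinarith
  calc ∑ T with ¬T ⊆ S ∧ T.card ≤ k, u T
      ≤ ∑ T with ¬T ⊆ S ∧ T.card ≤ k, ∑ i ∈ Sᶜ, if i ∈ T then u T else 0 :=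
        Finset.sum_le_sum fun T hT => by
          obtain ⟨i, hiT, hiS⟩ := Finset.not_subset.1 (Finset.mem_filter.1 hT).2.1
          refine le_of_eq_of_le (if_pos hiT).symm (Finset.single_le_sum (f := fun i =>
            if i ∈ T then u T else 0) (fun j _ => ?_) (Finset.mem_compl.2 hiS))
          split_ifs <;> simp [hu]
    _ = ∑ i ∈ Sᶜ, ∑ T with ¬T ⊆ S ∧ T.card ≤ k, if i ∈ T then u T else 0 := Finset.sum_comm
    _ ≤ ∑ i ∈ Sᶜ, Real.exp (2 * t * k) * ∑ T with i ∈ T, Real.exp (-(t * T.card)) ^ 2 * u T :=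
        Finset.sum_le_sum fun i _ => by
          rw [Finset.mul_sum, Finset.sum_filter (p := (i ∈ ·))]
          refine (Finset.sum_le_sum fun T hT => ?_).trans
            (Finset.sum_le_sum_of_subset_of_nonneg (Finset.filter_subset _ _) fun T _ _ => ?_)
          · split_ifs
            · exact hdamp (Finset.mem_filter.1 hT).2.2
            · simp
          · split_ifs
            · exact mul_nonneg (Real.exp_pos _).le (mul_nonneg (sq_nonneg _) (hu T))
            · exact le_rfl
    _ = Real.exp (2 * t * k) * ∑ i ∈ Sᶜ, nrm2sq w (Psemi w n t (Lcoord w i f)) := by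
        simp_rw [← Finset.mul_sum, nrm2sq_Psemi_Lcoord hw1]
        rfl

theorem nrm2sq_sub_sum_efronStein_le (hw0 : ∀ a, 0 < w a) (hw1 : ∑ a, w a = 1)
    {f : (Fin n → Ω) → ℝ} (hf : ∀ i x, |Lcoord w i f x| ≤ 1) {t k : ℝ} (ht : 0 ≤ t) (hk : 0 < k)
    (S : Finset (Fin n)) :
    nrm2sq w (f - ∑ T with T ⊆ S, efronStein w T f)
      ≤ Real.exp (2 * t * k) * ∑ i ∈ Sᶜ, nrm2sq w (Psemi w n t (Lcoord w i f))
        + (∑ i, influence w i f) / k := by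
  have hdiff : f - ∑ T with T ⊆ S, efronStein w T f
      = ∑ T with ¬T ⊆ S, (1 : ℝ) • efronStein w T f := by
    have hsplit := Finset.sum_filter_add_sum_filter_not Finset.univ (· ⊆ S)
      fun T => efronStein w T f
    rw [sum_efronStein] at hsplit
    simpa only [one_smul] using sub_eq_of_eq_add' hsplit.symm
  rw [hdiff, nrm2sq_sum_smul_efronStein hw1,
    ← Finset.sum_filter_add_sum_filter_not _ fun T => (T.card : ℝ) ≤ k]
  simp only [one_pow, one_mul, Finset.filter_filter]
  gcongr ?_ + ?_
  · exact sum_nrm2sq_efronStein_not_subset_le hw0 hw1 f ht S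
  · refine le_trans (Finset.sum_le_sum_of_subset_of_nonneg (fun T hT => ?_) fun T _ _ =>
      nrm2sq_nonneg hw0 _) (sum_nrm2sq_efronStein_card_gt_le hw0 hw1 hf hk)
    simp only [Finset.mem_filter, Finset.mem_univ, true_and, not_le] at hT ⊢
    exact hT.2

theorem nrm2sq_Psemi_Lcoord_le (hw0 : ∀ a, 0 < w a) {t : ℝ}
    (hhc : ∀ g : (Fin n → Ω) → ℝ, Real.sqrt (nrm2sq w (Psemi w n t g)) ≤ nrmp w (3 / 2) g)
    {f : (Fin n → Ω) → ℝ} {i : Fin n} (hf : ∀ x, |Lcoord w i f x| ≤ 1) {σ : ℝ} (hσ : 0 ≤ σ)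
    (hi : influence w i f ≤ σ ^ 3) :
    nrm2sq w (Psemi w n t (Lcoord w i f)) ≤ σ * influence w i f := by
  set a := influence w i f
  have ha : 0 ≤ a := influence_nonneg hw0 i f
  have hsqrt : Real.sqrt (nrm2sq w (Psemi w n t (Lcoord w i f))) ≤ a ^ (2 / 3 : ℝ) :=
    (hhc _).trans ((nrmp_le_nrm1_rpow_of_abs_le_one hw0 (p := 3 / 2) (by norm_num) hf).trans_eq
      (by norm_num [a, influence]))
  calc nrm2sq w (Psemi w n t (Lcoord w i f)) ≤ (a ^ (2 / 3 : ℝ)) ^ 2 :=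
        (Real.sqrt_le_left (by positivity)).1 hsqrt
    _ = a ^ (3⁻¹ : ℝ) * a := by
        rw [← Real.rpow_natCast, ← Real.rpow_mul ha, ← Real.rpow_add_one' ha (by norm_num)]
        norm_num
    _ ≤ σ * a := by
        refine mul_le_mul_of_nonneg_right ?_ ha
        calc a ^ (3⁻¹ : ℝ) ≤ (σ ^ 3) ^ ((3 : ℕ)⁻¹ : ℝ) := by
              exact_mod_cast Real.rpow_le_rpow ha hi (by norm_num)
          _ = σ := Real.pow_rpow_inv_natCast hσ (by norm_num)

theorem card_filter_le_sum_div {ι : Type*} [Fintype ι] {a : ι → ℝ} (ha : ∀ i, 0 ≤ a i) {τ : ℝ}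
    (hτ : 0 < τ) : (#{i | τ ≤ a i} : ℝ) ≤ (∑ i, a i) / τ := by
  rw [le_div_iff₀ hτ, ← nsmul_eq_mul]
  calc #{i | τ ≤ a i} • τ ≤ ∑ i with τ ≤ a i, a i :=
        Finset.card_nsmul_le_sum _ _ _ fun i hi => (Finset.mem_filter.1 hi).2
    _ ≤ ∑ i, a i :=
        Finset.sum_le_sum_of_subset_of_nonneg (Finset.filter_subset _ _) fun i _ _ => ha i

theorem div_cube_le_exp {I k t E : ℝ} (hIE : I ≤ E) (hk : 0 < k) (hkE : k ≤ 2 * E)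
    (htk : t * k ≤ E) : I / (k⁻¹ * Real.exp (-(2 * t * k))) ^ 3 ≤ Real.exp (13 * E) := by
  have hI' : I ≤ Real.exp E := hIE.trans ((le_add_of_nonneg_right zero_le_one).trans
    (Real.add_one_le_exp E))
  have hk' : k ≤ Real.exp (2 * E) := hkE.trans ((le_add_of_nonneg_right zero_le_one).trans
    (Real.add_one_le_exp _))
  calc I / (k⁻¹ * Real.exp (-(2 * t * k))) ^ 3 = I * k ^ 3 * Real.exp (6 * (t * k)) := by
        rw [mul_pow, ← Real.exp_nat_mul, div_eq_mul_inv, mul_inv, inv_pow, inv_inv,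
          ← Real.exp_neg]
        ring_nf
    _ ≤ Real.exp E * Real.exp (2 * E) ^ 3 * Real.exp (6 * E) := by gcongr
    _ = Real.exp (13 * E) := by
        rw [← Real.exp_nat_mul, ← Real.exp_add, ← Real.exp_add]
        ring_nf

theorem div_cube_le_exp_mul_div {I ρ ε t k : ℝ} (hI : 1 ≤ I) (hρ0 : 0 < ρ) (hρ1 : ρ ≤ 1)
    (hε0 : 0 < ε) (hε1 : ε < 1) (ht : t = Real.log 2 / (2 * ρ)) (hk : k = 2 * I / ε ^ 2) :
    I / (k⁻¹ * Real.exp (-(2 * t * k))) ^ 3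
      ≤ Real.exp (13 * I * (1 + |Real.log (ε * ρ)|) / (ρ * ε ^ 2)) := by
  have hρε : 0 < ρ * ε ^ 2 := by positivity
  have hρε1 : ρ * ε ^ 2 ≤ 1 := by nlinarith
  calc I / (k⁻¹ * Real.exp (-(2 * t * k))) ^ 3 ≤ Real.exp (13 * (I / (ρ * ε ^ 2))) := by
        refine div_cube_le_exp (le_div_self (by positivity) hρε hρε1) (by rw [hk]; positivity)
          ?_ ?_
        · rw [show 2 * (I / (ρ * ε ^ 2)) = k / ρ by rw [hk]; ring]
          exact le_div_self (by rw [hk]; positivity) hρ0 hρ1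
        · rw [show t * k = Real.log 2 * (I / (ρ * ε ^ 2)) by rw [ht, hk]; field_simp]
          nlinarith [Real.log_two_lt_d9, div_nonneg (by positivity : 0 ≤ I) hρε.le]
    _ ≤ _ := by
        rw [Real.exp_le_exp, mul_assoc, mul_div_assoc]
        gcongr
        exact le_mul_of_one_le_right (by positivity) (le_add_of_nonneg_right (abs_nonneg _))

theorem nrm2sq_sub_sum_efronStein_le_of_hypercontractive (hw0 : ∀ a, 0 < w a)
    (hw1 : ∑ a, w a = 1) {f : (Fin n → Ω) → ℝ} (hf : ∀ i x, |Lcoord w i f x| ≤ 1) {t : ℝ}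
    (ht : 0 ≤ t)
    (hhc : ∀ g : (Fin n → Ω) → ℝ, Real.sqrt (nrm2sq w (Psemi w n t g)) ≤ nrmp w (3 / 2) g)
    {k σ : ℝ} (hk : 0 < k) (hσ : 0 ≤ σ) {S : Finset (Fin n)}
    (hS : ∀ i ∉ S, influence w i f ≤ σ ^ 3) :
    nrm2sq w (f - ∑ T with T ⊆ S, efronStein w T f)
      ≤ Real.exp (2 * t * k) * (σ * ∑ i, influence w i f) + (∑ i, influence w i f) / k := by
  refine (nrm2sq_sub_sum_efronStein_le hw0 hw1 hf ht hk _).trans ?_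
  gcongr
  calc ∑ i ∈ Sᶜ, nrm2sq w (Psemi w n t (Lcoord w i f)) ≤ ∑ i ∈ Sᶜ, σ * influence w i f :=
        Finset.sum_le_sum fun i hi =>
          nrm2sq_Psemi_Lcoord_le hw0 hhc (hf i) hσ (hS i (Finset.mem_compl.1 hi))
    _ ≤ σ * ∑ i, influence w i f := by
        rw [← Finset.mul_sum]
        exact mul_le_mul_of_nonneg_left (Finset.sum_le_sum_of_subset_of_nonneg
          (Finset.subset_univ _) fun i _ _ => influence_nonneg hw0 i f) hσ

/-- There exists a universal constant `C > 0` with the following property.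
Let `Ω` be a finite set with full-support probability measure `μ`, and assume the product
semigroup `(P_t)` on `Ωⁿ` is hypercontractive with constant `ρ ∈ (0,1]`. Then for every
`ε ∈ (0,1)` and every `f : Ωⁿ → ℝ` with `max_{1≤i≤n} ‖L_i f‖_∞ ≤ 1` and total influence
`I(f) ≥ 1`, there exists a function `g : Ωⁿ → ℝ` depending on at most
`exp(C·I(f)·(1 + |log(ε ρ)|)/(ρ ε²))` coordinates such that `‖f − g‖_{L²(μ^{⊗n})} ≤ ε`. -/
theorem stmt2 :
    ∃ C : ℝ, 0 < C ∧
      ∀ (Ω : Type) (_ : Fintype Ω) (n : ℕ)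
        (w : Ω → ℝ), (∀ x, 0 < w x) → (∑ x, w x) = 1 →
        ∀ ρ : ℝ, 0 < ρ → ρ ≤ 1 →
        (∀ s : ℝ, 0 < s → ∀ g : (Fin n → Ω) → ℝ,
          Real.sqrt (nrm2sq w (Psemi w n s g)) ≤ nrmp w (1 + Real.exp (-2 * ρ * s)) g) →
        ∀ ε : ℝ, 0 < ε → ε < 1 →
        ∀ f : (Fin n → Ω) → ℝ, (∀ i : Fin n, ∀ x, |Lcoord w i f x| ≤ 1) →
        1 ≤ ∑ i : Fin n, influence w i f →
        ∃ g : (Fin n → Ω) → ℝ, ∃ S : Finset (Fin n),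
          (S.card : ℝ) ≤ Real.exp (C * (∑ i : Fin n, influence w i f) *
              (1 + |Real.log (ε * ρ)|) / (ρ * ε ^ 2)) ∧
          (∀ x y : Fin n → Ω, (∀ i ∈ S, x i = y i) → g x = g y) ∧
          Real.sqrt (nrm2sq w (fun x => f x - g x)) ≤ ε := by
  refine ⟨13, by norm_num, fun Ω _ n w hw0 hw1 ρ hρ0 hρ1 hhc ε hε0 hε1 f hf hI => ?_⟩
  set I := ∑ i, influence w i f
  set t := Real.log 2 / (2 * ρ) with ht_def
  set k := 2 * I / ε ^ 2 with hk_def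
  set σ := k⁻¹ * Real.exp (-(2 * t * k))
  set S : Finset (Fin n) := {i | σ ^ 3 ≤ influence w i f}
  have hk : 0 < k := by positivity
  have hhc' (g : (Fin n → Ω) → ℝ) : Real.sqrt (nrm2sq w (Psemi w n t g)) ≤ nrmp w (3 / 2) g := by
    have h := hhc t (by positivity) g
    rwa [show -2 * ρ * t = -Real.log 2 by rw [ht_def]; field_simp, Real.exp_neg,
      Real.exp_log two_pos, show (1 : ℝ) + 2⁻¹ = 3 / 2 by norm_num] at h
  refine ⟨∑ T with T ⊆ S, efronStein w T f, S, ?_, fun x y hxy => ?_, ?_⟩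
  · exact (card_filter_le_sum_div (influence_nonneg hw0 · f) (by positivity)).trans
      (div_cube_le_exp_mul_div hI hρ0 hρ1 hε0 hε1 ht_def hk_def)
  · rw [Finset.sum_apply, Finset.sum_apply]
    exact Finset.sum_congr rfl fun T hT =>
      efronStein_apply_eq_of_subset (Finset.mem_filter.1 hT).2 f hxy
  · refine (Real.sqrt_le_left hε0.le).2 ((nrm2sq_sub_sum_efronStein_le_of_hypercontractive
      hw0 hw1 hf (by positivity) hhc' hk (σ := σ) (by positivity) fun i hi => ?_).trans_eq ?_)
    · exact le_of_lt (by simpa [S] using hi)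
    · have hσk : Real.exp (2 * t * k) * σ = k⁻¹ := by
        rw [mul_left_comm, ← Real.exp_add, add_neg_cancel, Real.exp_zero, mul_one]
      rw [← mul_assoc, hσk, ← div_eq_inv_mul, ← two_mul]
      field_simp
      rw [hk_def, div_mul_cancel₀ _ (by positivity)]
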